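/- arXiv:2402.09293 — 2 statements merged into one kernel-verified Lean document; each statement's English description precedes it below -/
import Mathlib

section
/- Let m be a negative square-free integer with m ≢ 1 (mod 4), and let α = m^(1/8) be a root of x^8 - m. Then x^8 - m is irreducible over ℚ and (1, α, α², α³, α⁴, α⁵, α⁶, α⁷) is an integral basis of the ring of integers of K = ℚ(α). -/
set_option maxHeartbeats 1000000
set_option synthInstance.maxHeartbeats 400000

open Polynomial Algebra

lemma pure_octic_eis_f (m p : ℤ) (hsf : Squarefree m) (hp : Prime p) (hpm : p ∣ m) :
    ((X : ℤ[X]) ^ 8 - C m).IsEisensteinAt (Ideal.span {p}) := by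
  have hdeg : ((X : ℤ[X]) ^ 8 - C m).natDegree = 8 := natDegree_X_pow_sub_C
  refine ⟨?_, ?_, ?_⟩
  · rw [(monic_X_pow_sub_C m (by norm_num : (8:ℕ) ≠ 0)).leadingCoeff, Ideal.mem_span_singleton]
    exact fun h => hp.not_unit (isUnit_of_dvd_one h)
  · intro n hn
    rw [hdeg] at hn
    rw [coeff_sub, coeff_X_pow, coeff_C, Ideal.mem_span_singleton]
    rcases eq_or_ne n 0 with h0 | h0
    · simpa [h0] using dvd_neg.mpr hpm
    · simp [h0, Nat.ne_of_lt hn]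
  · rw [coeff_sub, coeff_X_pow, coeff_C, Ideal.span_singleton_pow, Ideal.mem_span_singleton]
    simp only [if_pos rfl, if_neg (by norm_num : ¬ (0:ℕ) = 8)]
    intro h
    rw [zero_sub, dvd_neg, pow_two] at h
    exact hp.not_unit (hsf p h)

lemma pure_octic_comp_g (m : ℤ) :
    ((X : ℤ[X]) ^ 8 - C m).comp (X + C (-1)) = ((X : ℤ[X]) + C (-1)) ^ 8 - C m := by
  simp [sub_comp, pow_comp]

lemma pure_octic_g_monic (m : ℤ) : (((X : ℤ[X]) + C (-1)) ^ 8 - C m).Monic := by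
  rw [← pure_octic_comp_g]
  exact (monic_X_pow_sub_C m (by norm_num : (8:ℕ) ≠ 0)).comp (monic_X_add_C (-1))
    (by rw [natDegree_X_add_C]; norm_num)

lemma pure_octic_g_natDegree (m : ℤ) : (((X : ℤ[X]) + C (-1)) ^ 8 - C m).natDegree = 8 := by
  rw [← pure_octic_comp_g, natDegree_comp, natDegree_X_pow_sub_C, natDegree_X_add_C, mul_one]

lemma pure_octic_eis_g (m : ℤ) (h43 : m % 4 = 3) :
    (((X : ℤ[X]) + C (-1)) ^ 8 - C m).IsEisensteinAt (Ideal.span {(2:ℤ)}) := by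
  have hcoeff : ∀ k, (((X : ℤ[X]) + C (-1)) ^ 8 - C m).coeff k
      = (-1)^(8-k) * (Nat.choose 8 k : ℤ) - (if k = 0 then m else 0) := by
    intro k
    rw [coeff_sub, coeff_X_add_C_pow, coeff_C]
  refine ⟨?_, ?_, ?_⟩
  · rw [(pure_octic_g_monic m).leadingCoeff, Ideal.mem_span_singleton]
    norm_num
  · intro n hn
    rw [pure_octic_g_natDegree] at hn
    rw [hcoeff, Ideal.mem_span_singleton]
    interval_cases n <;> norm_num [Nat.choose] <;> omega
  · rw [hcoeff, Ideal.span_singleton_pow, Ideal.mem_span_singleton]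
    norm_num [Nat.choose]
    omega

lemma pure_octic_g_irred (m : ℤ) (h43 : m % 4 = 3) :
    Irreducible (((X : ℤ[X]) + C (-1)) ^ 8 - C m) :=
  (pure_octic_eis_g m h43).irreducible
    ((Ideal.span_singleton_prime (by norm_num)).mpr Int.prime_two)
    (pure_octic_g_monic m).isPrimitive
    (by rw [pure_octic_g_natDegree]; norm_num)

lemma pure_octic_f_irred (m : ℤ) (hsf : Squarefree m) (h4 : m % 4 ≠ 1) :
    Irreducible ((X : ℤ[X]) ^ 8 - C m) := by
  rcases em ((2:ℤ) ∣ m) with h2 | h2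
  · exact (pure_octic_eis_f m 2 hsf Int.prime_two h2).irreducible
      ((Ideal.span_singleton_prime (by norm_num)).mpr Int.prime_two)
      (monic_X_pow_sub_C m (by norm_num : (8:ℕ) ≠ 0)).isPrimitive
      (by rw [natDegree_X_pow_sub_C]; norm_num)
  · have h43 : m % 4 = 3 := by omega
    have he : (algEquivAevalXAddC (-1:ℤ)) ((X : ℤ[X]) ^ 8 - C m)
        = ((X : ℤ[X]) + C (-1)) ^ 8 - C m := by
      rw [algEquivAevalXAddC_apply, ← comp_eq_aeval, pure_octic_comp_g]
    exact (MulEquiv.irreducible_iff (algEquivAevalXAddC (-1:ℤ))).mp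
      (he ▸ pure_octic_g_irred m h43)

lemma pure_octic_map_cast (m : ℤ) :
    ((X : ℤ[X]) ^ 8 - C m).map (Int.castRingHom ℚ) = (X : ℚ[X]) ^ 8 - C (m : ℚ) := by
  simp

lemma pure_octic_g_map_cast (m : ℤ) :
    (((X : ℤ[X]) + C (-1)) ^ 8 - C m).map (Int.castRingHom ℚ)
      = ((X : ℚ[X]) + C (-1)) ^ 8 - C (m : ℚ) := by
  simp

lemma pure_octic_fq_irred (m : ℤ) (hsf : Squarefree m) (h4 : m % 4 ≠ 1) :
    Irreducible ((X : ℚ[X]) ^ 8 - C (m : ℚ)) := by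
  rw [← pure_octic_map_cast]
  exact (Polynomial.IsPrimitive.Int.irreducible_iff_irreducible_map_cast
    (monic_X_pow_sub_C m (by norm_num : (8:ℕ) ≠ 0)).isPrimitive).mp
    (pure_octic_f_irred m hsf h4)

lemma pure_octic_gq_irred (m : ℤ) (h43 : m % 4 = 3) :
    Irreducible (((X : ℚ[X]) + C (-1)) ^ 8 - C (m : ℚ)) := by
  rw [← pure_octic_g_map_cast]
  exact (Polynomial.IsPrimitive.Int.irreducible_iff_irreducible_map_cast
    (pure_octic_g_monic m).isPrimitive).mp (pure_octic_g_irred m h43)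

theorem pure_octic_integral_basis (m : ℤ) (hm : m < 0) (hsf : Squarefree m)
    (h4 : m % 4 ≠ 1) (α : ℂ) (hα : α ^ 8 = (m : ℂ)) :
    Irreducible ((Polynomial.X : Polynomial ℚ) ^ 8 - Polynomial.C (m : ℚ)) ∧
    ∀ (K : IntermediateField ℚ ℂ) (hK : α ∈ K), K = IntermediateField.adjoin ℚ {α} →
      ∃ β : integralClosure ℤ K, (β : K) = ⟨α, hK⟩ ∧ Algebra.adjoin ℤ {β} = ⊤ := by
  have irrQ := pure_octic_fq_irred m hsf h4
  refine ⟨irrQ, ?_⟩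
  intro K hK hKeq
  subst hKeq
  have hfmonic : ((X:ℤ[X])^8 - C m).Monic := monic_X_pow_sub_C m (by norm_num : (8:ℕ) ≠ 0)
  have hαZ : IsIntegral ℤ α := ⟨_, hfmonic, by rw [← aeval_def]; simp [hα]⟩
  have hαQ : IsIntegral ℚ α := hαZ.tower_top
  set L := IntermediateField.adjoin ℚ {α} with hL
  set B := IntermediateField.adjoin.powerBasis hαQ with hB
  have hgenC : algebraMap L ℂ B.gen = α := by
    rw [hB, IntermediateField.adjoin.powerBasis_gen]
    exact IntermediateField.AdjoinSimple.algebraMap_gen ℚ α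
  have hinjL : Function.Injective (algebraMap L ℂ) := (algebraMap L ℂ).injective
  have hminQ : minpoly ℚ B.gen = (X:ℚ[X])^8 - C (m:ℚ) := by
    have hmg := minpoly.algebraMap_eq (A := ℚ) hinjL B.gen
    rw [← hmg, hgenC]
    exact (minpoly.eq_of_irreducible_of_monic irrQ
      (show (aeval α) ((X:ℚ[X])^8 - C (m:ℚ)) = 0 by simp [hα])
      (monic_X_pow_sub_C _ (by norm_num : (8:ℕ) ≠ 0))).symm
  have hgen8 : B.gen ^ 8 = algebraMap ℤ L m := by
    apply hinjL
    rw [map_pow, hgenC, hα, ← IsScalarTower.algebraMap_apply]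
    simp
  have hgenZ : IsIntegral ℤ B.gen := ⟨_, hfmonic, by rw [← aeval_def]; simp [hgen8]⟩
  have hminZ : minpoly ℤ B.gen = (X:ℤ[X])^8 - C m := by
    have h1 := minpoly.isIntegrallyClosed_eq_field_fractions' ℚ hgenZ
    apply Polynomial.map_injective (Int.castRingHom ℚ) Int.cast_injective
    rw [show (Int.castRingHom ℚ) = algebraMap ℤ ℚ from rfl, ← h1, hminQ,
      show algebraMap ℤ ℚ = Int.castRingHom ℚ from rfl, pure_octic_map_cast]
  haveI hLfin : FiniteDimensional ℚ L := B.finite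
  haveI hLint : Algebra.IsIntegral ℚ L := Algebra.IsIntegral.of_finite ℚ L
  haveI hLsep : Algebra.IsSeparable ℚ L := Algebra.IsSeparable.of_integral ℚ L
  have hstrip : ∀ p : ℤ, Prime p → (p ∣ m ∨ p = 2) → ∀ z : L, IsIntegral ℤ z →
      p • z ∈ Algebra.adjoin ℤ ({B.gen} : Set L) → z ∈ Algebra.adjoin ℤ ({B.gen} : Set L) := by
    have key_eis : ∀ p : ℤ, Prime p → p ∣ m → ∀ z : L, IsIntegral ℤ z →
        p • z ∈ Algebra.adjoin ℤ ({B.gen} : Set L) →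
        z ∈ Algebra.adjoin ℤ ({B.gen} : Set L) := by
      intro p hp hpm z hz hpz
      refine mem_adjoin_of_smul_prime_pow_smul_of_minpoly_isEisensteinAt
        (K := ℚ) (B := B) (n := 1) hp hgenZ hz ?_ ?_
      · rwa [pow_one]
      · rw [hminZ]; exact pure_octic_eis_f m p hsf hp hpm
    intro p hp hpm z hz hpz
    rcases hpm with hpm | rfl
    · exact key_eis p hp hpm z hz hpz
    rcases em ((2:ℤ) ∣ m) with h2 | h2
    · exact key_eis 2 hp h2 z hz hpz
    have h43 : m % 4 = 3 := by omega
    have hγQ : IsIntegral ℚ (B.gen + 1) := (hgenZ.tower_top).add isIntegral_one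
    have hmem : B.gen ∈ Algebra.adjoin ℚ {B.gen + 1} := by
      have he : (B.gen + 1) - 1 ∈ Algebra.adjoin ℚ {B.gen + 1} :=
        sub_mem (Algebra.self_mem_adjoin_singleton ℚ _) (one_mem _)
      simpa using he
    set B' := PowerBasis.ofAdjoinEqTop hγQ (PowerBasis.adjoin_eq_top_of_gen_mem_adjoin (B := B) hmem) with hB'
    have hB'gen : B'.gen = B.gen + 1 := by rw [hB']; exact PowerBasis.ofAdjoinEqTop_gen _ _
    have hγZ : IsIntegral ℤ B'.gen := by rw [hB'gen]; exact hgenZ.add isIntegral_one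
    have hgen8' : B.gen ^ 8 = algebraMap ℚ L ((m:ℤ):ℚ) := by
      rw [hgen8, IsScalarTower.algebraMap_apply ℤ ℚ L]
      norm_num
    have haevalγ : (aeval (B.gen + 1)) (((X:ℚ[X]) + C (-1))^8 - C ((m:ℤ):ℚ)) = 0 := by
      simp only [map_sub, map_pow, map_add, aeval_X, aeval_C, map_neg, map_one]
      rw [add_neg_cancel_right, hgen8', sub_self]
    have hmonicq : (((X:ℚ[X]) + C (-1))^8 - C ((m:ℤ):ℚ)).Monic := by
      have := (pure_octic_g_monic m).map (Int.castRingHom ℚ)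
      rwa [pure_octic_g_map_cast] at this
    have hminQ' : minpoly ℚ B'.gen = ((X:ℚ[X]) + C (-1))^8 - C ((m:ℤ):ℚ) := by
      rw [hB'gen]
      exact (minpoly.eq_of_irreducible_of_monic (pure_octic_gq_irred m h43)
        haevalγ hmonicq).symm
    have hminZ' : minpoly ℤ B'.gen = ((X:ℤ[X]) + C (-1))^8 - C m := by
      have h1 := minpoly.isIntegrallyClosed_eq_field_fractions' ℚ hγZ
      apply Polynomial.map_injective (Int.castRingHom ℚ) Int.cast_injective
      rw [show (Int.castRingHom ℚ) = algebraMap ℤ ℚ from rfl, ← h1, hminQ',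
        show algebraMap ℤ ℚ = Int.castRingHom ℚ from rfl, pure_octic_g_map_cast]
    have hAA : Algebra.adjoin ℤ {B.gen + 1} = Algebra.adjoin ℤ ({B.gen} : Set L) := by
      apply le_antisymm
      · rw [Algebra.adjoin_le_iff, Set.singleton_subset_iff]
        exact add_mem (Algebra.self_mem_adjoin_singleton ℤ _) (one_mem _)
      · rw [Algebra.adjoin_le_iff, Set.singleton_subset_iff]
        have he : (B.gen + 1) - 1 ∈ Algebra.adjoin ℤ {B.gen + 1} :=
          sub_mem (Algebra.self_mem_adjoin_singleton ℤ _) (one_mem _)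
        simpa using he
    have hz2 : (2:ℤ)^1 • z ∈ Algebra.adjoin ℤ ({B'.gen} : Set L) := by
      rw [pow_one, hB'gen, hAA]; exact hpz
    have hfin := mem_adjoin_of_smul_prime_pow_smul_of_minpoly_isEisensteinAt (K := ℚ)
      Int.prime_two hγZ hz hz2 (by rw [hminZ']; exact pure_octic_eis_g m h43)
    rwa [hB'gen, hAA] at hfin
  have hminQα : minpoly ℚ α = minpoly ℚ B.gen := by
    conv_lhs => rw [← hgenC]
    exact minpoly.algebraMap_eq hinjL B.gen
  have hdim : B.dim = 8 := by
    rw [hB, IntermediateField.adjoin.powerBasis_dim, hminQα, hminQ, natDegree_X_pow_sub_C]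
  have hrank : Module.finrank ℚ L = 8 := by rw [B.finrank, hdim]
  have hdisc : Algebra.discr ℚ B.basis = algebraMap ℤ ℚ (2^24 * (-m)^7) := by
    rw [show Algebra.discr ℚ B.basis = (-1) ^ (Module.finrank ℚ L * (Module.finrank ℚ L - 1) / 2) *
        Algebra.norm ℚ (aeval B.gen (derivative (minpoly ℚ B.gen))) from
        Algebra.discr_powerBasis_eq_norm ℚ B, hminQ, derivative_sub, derivative_C,
      derivative_X_pow, sub_zero, map_mul, aeval_C, map_pow, aeval_X, map_mul,
      Algebra.norm_algebraMap, map_pow,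
      show Algebra.norm ℚ B.gen = (-1) ^ B.dim * coeff (minpoly ℚ B.gen) 0 from
        PowerBasis.norm_gen_eq_coeff_zero_minpoly B,
      hminQ, hrank, hdim]
    simp only [coeff_sub, coeff_X_pow, coeff_C, eq_intCast]
    norm_num
  have hdescent : ∀ n : ℕ, ∀ d : ℤ, d.natAbs = n → d ≠ 0 →
      (∀ p : ℤ, Prime p → p ∣ d → p ∣ m ∨ p ∣ 2) →
      ∀ z : L, IsIntegral ℤ z → d • z ∈ Algebra.adjoin ℤ ({B.gen} : Set L) →
        z ∈ Algebra.adjoin ℤ ({B.gen} : Set L) := by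
    intro n
    induction n using Nat.strong_induction_on with
    | _ n ih =>
    intro d hdn hd0 hgood z hz hdz
    rcases eq_or_ne d.natAbs 1 with h1 | h1
    · rcases Int.isUnit_iff.mp (Int.isUnit_iff_natAbs_eq.mpr h1) with rfl | rfl
      · simpa using hdz
      · have hneg : -((-1:ℤ) • z) ∈ Algebra.adjoin ℤ ({B.gen} : Set L) := neg_mem hdz
        simpa using hneg
    · obtain ⟨p, hp, hpd⟩ := Int.exists_prime_and_dvd h1
      have hpnat : Nat.Prime p.natAbs := Int.prime_iff_natAbs_prime.mp hp
      have hq : Prime ((p.natAbs : ℕ) : ℤ) := by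
        rw [Int.prime_iff_natAbs_prime, Int.natAbs_natCast]
        exact hpnat
      have hqd : ((p.natAbs : ℕ) : ℤ) ∣ d := Int.natAbs_dvd.mpr hpd
      obtain ⟨e, he⟩ := hqd
      have he0 : e ≠ 0 := by
        rintro rfl
        rw [mul_zero] at he
        exact hd0 he
      have hlt : e.natAbs < n := by
        have hval : d.natAbs = p.natAbs * e.natAbs := by
          rw [he, Int.natAbs_mul, Int.natAbs_natCast]
        have h2le := hpnat.two_le
        have he1 : 1 ≤ e.natAbs := Nat.one_le_iff_ne_zero.mpr (Int.natAbs_ne_zero.mpr he0)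
        rw [← hdn, hval]
        nlinarith
      have hez : IsIntegral ℤ (e • z) := by
        rw [zsmul_eq_mul]
        have hecast : IsIntegral ℤ ((e : ↥L)) := by
          have := isIntegral_algebraMap (R := ℤ) (A := ↥L) (x := e)
          rwa [algebraMap_int_eq, eq_intCast] at this
        exact hecast.mul hz
      have hqez : ((p.natAbs : ℕ) : ℤ) • (e • z) ∈ Algebra.adjoin ℤ ({B.gen} : Set L) := by
        rw [← mul_smul, ← he]
        exact hdz
      have hgoodq : ((p.natAbs : ℕ) : ℤ) ∣ m ∨ ((p.natAbs : ℕ) : ℤ) = 2 := by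
        rcases hgood _ hq ⟨e, he⟩ with h | h
        · exact Or.inl h
        · right
          have h2' : p.natAbs ∣ 2 := by exact_mod_cast h
          have := (Nat.prime_dvd_prime_iff_eq hpnat Nat.prime_two).mp h2'
          exact_mod_cast this
      have hstep := hstrip _ hq hgoodq (e • z) hez hqez
      exact ih e.natAbs hlt e rfl he0
        (fun r hr hrd => hgood r hr (hrd.trans ⟨((p.natAbs : ℕ) : ℤ), by rw [he]; ring⟩))
        z hz hstep
  have hkey : ∀ z : ↥L, IsIntegral ℤ z → z ∈ Algebra.adjoin ℤ ({B.gen} : Set L) := by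
    intro z hz
    have hd := Algebra.discr_mul_isIntegral_mem_adjoin ℚ hgenZ hz
    rw [((Algebra.discr_powerBasis_eq_norm ℚ B).trans (Algebra.discr_powerBasis_eq_norm ℚ B).symm).trans hdisc,
      algebraMap_smul] at hd
    refine hdescent (2^24 * (-m)^7).natAbs _ rfl ?_ ?_ z hz hd
    · have hm0 : m ≠ 0 := by omega
      have : (-m)^7 ≠ 0 := pow_ne_zero _ (neg_ne_zero.mpr hm0)
      positivity
    · intro p hp hpd
      rcases hp.dvd_mul.mp hpd with h | h
      · exact Or.inr (hp.dvd_of_dvd_pow h)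
      · exact Or.inl (dvd_neg.mp (hp.dvd_of_dvd_pow h))
  have hgeq : (⟨α, hK⟩ : ↥L) = B.gen := by
    apply Subtype.ext
    exact (hgenC : (B.gen : ℂ) = α).symm
  have hβmem : (⟨α, hK⟩ : ↥L) ∈ integralClosure ℤ ↥L :=
    (mem_integralClosure_iff ℤ ↥L).mpr (hgeq ▸ hgenZ)
  refine ⟨⟨⟨α, hK⟩, hβmem⟩, rfl, ?_⟩
  rw [_root_.eq_top_iff]
  rintro x -
  have hxA := hkey (x : ↥L) ((mem_integralClosure_iff ℤ ↥L).mp x.2)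
  rw [← hgeq] at hxA
  have hmap : (Algebra.adjoin ℤ {(⟨⟨α, hK⟩, hβmem⟩ : integralClosure ℤ ↥L)}).map
      (integralClosure ℤ ↥L).val = Algebra.adjoin ℤ {(⟨α, hK⟩ : ↥L)} := by
    rw [AlgHom.map_adjoin, Set.image_singleton]
    rfl
  rw [← hmap] at hxA
  obtain ⟨y, hy, hyx⟩ := hxA
  have hyx' : y = x := Subtype.ext hyx
  exact hyx' ▸ hy
end

section
/- Let M = ℚ(√m) with m < 0 square-free, m ≢ 1 (mod 4), and ring of integers ℤ_M = ℤ[√m]. Suppose U, V ∈ ℤ_M satisfy U·(U² + 4√m·V²) = ε where ε is a unit of ℤ_M. Then U is a unit of ℤ_M and V = 0. -/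
private lemma cubic_key (m a b c d : ℤ) (hm1 : m ≤ -1)
    (nU : a * a - m * b * b = 1)
    (nW : (a * a + m * b * b + m * 4 * (c * d + d * c)) *
            (a * a + m * b * b + m * 4 * (c * d + d * c)) -
          m * (a * b + b * a + 4 * (c * c + m * d * d)) *
            (a * b + b * a + 4 * (c * c + m * d * d)) = 1) :
    c = 0 ∧ d = 0 := by
  have hab : a * b = 0 := by
    clear nW
    rcases eq_or_ne a 0 with h0 | h0
    · simp [h0]
    rcases eq_or_ne b 0 with h1 | h1
    · simp [h1]
    have ha1 : 1 ≤ a * a := by rcases h0.lt_or_gt with hh | hh <;> nlinarith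
    have hb1 : 1 ≤ b * b := by rcases h1.lt_or_gt with hh | hh <;> nlinarith
    nlinarith
  have hs : (a * a + m * b * b) * (a * a + m * b * b) = 1 := by
    clear nW
    rcases mul_eq_zero.mp hab with h0 | h0
    · rw [h0] at nU ⊢; ring_nf at nU ⊢; nlinarith
    · rw [h0] at nU ⊢; ring_nf at nU ⊢; nlinarith
  -- eliminate the a*b cross terms from nW
  have nW' : (a * a + m * b * b + 8 * m * (c * d)) ^ 2
      - m * (4 * (c * c + m * d * d)) ^ 2 = 1 := by
    linear_combination nW + (m * (4 * a * b + 16 * (c * c + m * d * d))) * hab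
  clear nW
  have hX : c * c + m * (d * d) = 0 := by
    by_contra hne
    have h1 : 1 ≤ (c * c + m * (d * d)) * (c * c + m * (d * d)) := by
      rcases lt_or_gt_of_ne hne with hh | hh <;> nlinarith
    have h16 : 1 * 1 ≤ (-m) * ((c * c + m * (d * d)) * (c * c + m * (d * d))) :=
      mul_le_mul (by linarith) h1 (by norm_num) (by linarith)
    nlinarith [sq_nonneg (a * a + m * b * b + 8 * m * (c * d))]
  have h2 : (a * a + m * b * b + 8 * m * (c * d)) ^ 2 = 1 := by
    linear_combination nW' + (16 * m * (c * c + m * (d * d))) * hX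
  have ht : (8 * m * (c * d)) * (8 * m * (c * d) + 2 * (a * a + m * b * b)) = 0 := by
    linear_combination h2 - hs
  have htt : (8 * m * (c * d)) * (8 * m * (c * d)) ≤ 4 := by
    rcases mul_eq_zero.mp ht with h0 | h0
    · rw [h0]; norm_num
    · nlinarith [hs]
  have hcd : c * d = 0 := by
    by_contra hne
    have h1 : 1 ≤ (c * d) * (c * d) := by
      rcases lt_or_gt_of_ne hne with hh | hh <;> nlinarith
    have hmm : 1 ≤ m * m := by nlinarith
    nlinarith
  rcases mul_eq_zero.mp hcd with h0 | h0
  · refine ⟨h0, ?_⟩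
    rw [h0] at hX
    have hmd : m * (d * d) = 0 := by linarith
    rcases mul_eq_zero.mp hmd with h1 | h1
    · omega
    · exact mul_self_eq_zero.mp h1
  · refine ⟨?_, h0⟩
    rw [h0] at hX
    have : c * c = 0 := by nlinarith
    exact mul_self_eq_zero.mp this

theorem cubic_form_unit_solutions (m : ℤ) (hm : m < 0) (hsf : Squarefree m) (h4 : m % 4 ≠ 1)
    (U V : ℤ√m) (ε : (ℤ√m)ˣ)
    (h : U * (U ^ 2 + 4 * Zsqrtd.sqrtd * V ^ 2) = (ε : ℤ√m)) :
    IsUnit U ∧ V = 0 := by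
  have hε : IsUnit (U * (U ^ 2 + 4 * Zsqrtd.sqrtd * V ^ 2)) := h ▸ ε.isUnit
  have hU : IsUnit U := isUnit_of_mul_isUnit_left hε
  have hW : IsUnit (U ^ 2 + 4 * Zsqrtd.sqrtd * V ^ 2) := isUnit_of_mul_isUnit_right hε
  have hm' : m ≤ 0 := le_of_lt hm
  have nU : U.norm = 1 := (Zsqrtd.norm_eq_one_iff' hm' U).mpr hU
  have nW : (U ^ 2 + 4 * Zsqrtd.sqrtd * V ^ 2).norm = 1 :=
    (Zsqrtd.norm_eq_one_iff' hm' _).mpr hW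
  simp only [Zsqrtd.norm_def, pow_two, Zsqrtd.re_mul, Zsqrtd.im_mul, Zsqrtd.re_add,
    Zsqrtd.im_add, Zsqrtd.re_sqrtd, Zsqrtd.im_sqrtd, Zsqrtd.re_ofNat, Zsqrtd.im_ofNat, Nat.cast_ofNat,
    mul_zero, zero_mul, mul_one, add_zero, zero_add] at nU nW
  have key := cubic_key m U.re U.im V.re V.im (by omega) (by linear_combination nU) (by linear_combination nW)
  refine ⟨hU, ?_⟩
  have : V = ⟨0, 0⟩ := by
    ext <;> simp [key.1, key.2]
  exact this
end
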